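/- arXiv:1602.05950 — 2 statements merged into one kernel-verified Lean document; each statement's English description precedes it below -/
import Mathlib

section
/- Under the same hypotheses as the CUR error bounds (A = B + C, orthogonal [Q₁ᴸ, Q₂ᴸ] and [Q₁ᵁ, Q₂ᵁ], (Q₂ᴸ)ᵀA = (Q₂ᴸ)ᵀC, AQ₂ᵁ = CQ₂ᵁ), if σⱼ(A)² > 2‖C‖₂², then σⱼ(Q₁ᴸ(Q₁ᴸ)ᵀAQ₁ᵁ(Q₁ᵁ)ᵀ) ≥ √(σⱼ(A)² − 2‖C‖₂²). Equivalently, σⱼ(A) ≤ σⱼ((Q₁ᴸ)ᵀAQ₁ᵁ)·√(1 + 2(‖C‖₂/σⱼ((Q₁ᴸ)ᵀAQ₁ᵁ))²). -/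
open Matrix
noncomputable def specNorm {m n : Type*} [Fintype m] [Fintype n] [DecidableEq n]
    (A : Matrix m n ℝ) : ℝ :=
  ‖LinearMap.toContinuousLinearMap (Matrix.toEuclideanLin A)‖

noncomputable def frobNorm {m n : Type*} [Fintype m] [Fintype n]
    (A : Matrix m n ℝ) : ℝ :=
  Real.sqrt (∑ i, ∑ j, (A i j) ^ 2)

/-- The `j`-th largest singular value of `A` (1-indexed), characterized as the
distance in spectral norm from `A` to the set of matrices of rank `< j`. -/
noncomputable def sval {m n : Type*} [Fintype m] [Fintype n] [DecidableEq n]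
    (A : Matrix m n ℝ) (j : ℕ) : ℝ :=
  sInf { c | ∃ B : Matrix m n ℝ, B.rank < j ∧ specNorm (A - B) = c }

/-
Let `P = Q₁ᴸ(Q₁ᴸ)ᵀ` and `R = Q₁ᵁ(Q₁ᵁ)ᵀ`; these are orthogonal projectors with `1 - P = Q₂ᴸ(Q₂ᴸ)ᵀ`
and `1 - R = Q₂ᵁ(Q₂ᵁ)ᵀ`. For any orthogonal projector `P`, the columns of `P * X` and
`(1 - P) * A` are orthogonal, so `‖P * X + (1 - P) * A‖² ≤ ‖X‖² + ‖(1 - P) * A‖²`; applied to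
`X = P * A - B` (note `rank (P * B) ≤ rank B`), this gives
`σⱼ(A)² ≤ σⱼ(P * A)² + ‖(1 - P) * A‖²`. Doing this once on the left with `P` and once on the
right with `R`, the two error terms are `‖Q₂ᴸ(Q₂ᴸ)ᵀC‖` and `‖P C Q₂ᵁ(Q₂ᵁ)ᵀ‖`, each at most `‖C‖`.
-/

-- Under this instance `‖A‖` is `specNorm A` by definition.
open scoped Matrix.Norms.L2Operator

section Blocks

variable {R m k k' : Type*} [CommRing R]

theorem Matrix.transpose_mul_self_eq_one_of_fromCols [Fintype m] [DecidableEq k]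
    [DecidableEq k'] {Q₁ : Matrix m k R} {Q₂ : Matrix m k' R}
    (h : (fromCols Q₁ Q₂)ᵀ * fromCols Q₁ Q₂ = 1) : Q₁ᵀ * Q₁ = 1 := by
  rw [transpose_fromCols, fromRows_mul_fromCols, ← fromBlocks_one] at h
  exact (fromBlocks_inj.mp h).1

theorem Matrix.one_sub_mul_transpose_eq_of_fromCols [Fintype k] [Fintype k'] [DecidableEq m]
    {Q₁ : Matrix m k R} {Q₂ : Matrix m k' R}
    (h : fromCols Q₁ Q₂ * (fromCols Q₁ Q₂)ᵀ = 1) : 1 - Q₁ * Q₁ᵀ = Q₂ * Q₂ᵀ := by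
  rw [transpose_fromCols, fromCols_mul_fromRows] at h
  exact sub_eq_of_eq_add' h.symm

end Blocks

section L2Norm

variable {m n k : Type*} [Fintype m] [Fintype n] [DecidableEq n]

theorem Matrix.isStarProjection_mul_transpose [Fintype k] [DecidableEq k] {Q : Matrix m k ℝ}
    (h : Qᵀ * Q = 1) : IsStarProjection (Q * Qᵀ) where
  isIdempotentElem := by
    rw [IsIdempotentElem, Matrix.mul_assoc, ← Matrix.mul_assoc Qᵀ, h, Matrix.one_mul]
  isSelfAdjoint := by
    rw [IsSelfAdjoint, star_eq_conjTranspose, conjTranspose_eq_transpose_of_trivial,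
      transpose_mul, transpose_transpose]

theorem IsStarProjection.transpose_eq {P : Matrix m m ℝ} (hP : IsStarProjection P) : Pᵀ = P := by
  rw [← conjTranspose_eq_transpose_of_trivial, ← star_eq_conjTranspose, hP.isSelfAdjoint.star_eq]

theorem Matrix.l2_opNorm_transpose [DecidableEq m] (A : Matrix m n ℝ) : ‖Aᵀ‖ = ‖A‖ := by
  rw [← conjTranspose_eq_transpose_of_trivial, l2_opNorm_conjTranspose]

theorem IsStarProjection.l2_opNorm_mul_le [DecidableEq m] {P : Matrix m m ℝ}
    (hP : IsStarProjection P) (A : Matrix m n ℝ) : ‖P * A‖ ≤ ‖A‖ :=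
  (l2_opNorm_mul P A).trans (mul_le_of_le_one_left (norm_nonneg A) (hP.norm_le P))

theorem IsStarProjection.l2_opNorm_mul_le' {P : Matrix n n ℝ} (hP : IsStarProjection P)
    (A : Matrix m n ℝ) : ‖A * P‖ ≤ ‖A‖ :=
  (l2_opNorm_mul A P).trans (mul_le_of_le_one_right (norm_nonneg A) (hP.norm_le P))

theorem Matrix.l2_opNorm_add_sq_le [DecidableEq m] {X Y : Matrix m n ℝ} (h : Xᵀ * Y = 0) :
    ‖X + Y‖ ^ 2 ≤ ‖X‖ ^ 2 + ‖Y‖ ^ 2 := by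
  have hYX : Yᵀ * X = 0 := by simpa using congrArg transpose h
  have hgram : (X + Y)ᴴ * (X + Y) = Xᴴ * X + Yᴴ * Y := by
    simp only [conjTranspose_eq_transpose_of_trivial, transpose_add, Matrix.add_mul,
      Matrix.mul_add, h, hYX, add_zero, zero_add]
  simp only [sq, ← l2_opNorm_conjTranspose_mul_self, hgram]
  exact norm_add_le _ _

end L2Norm

section SingularValues

variable {m n : Type*} [Fintype m] [Fintype n] [DecidableEq n]

theorem sval_nonneg (A : Matrix m n ℝ) (j : ℕ) : 0 ≤ sval A j :=
  Real.sInf_nonneg (by rintro c ⟨B, -, rfl⟩; exact norm_nonneg _)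

theorem sval_zero (A : Matrix m n ℝ) : sval A 0 = 0 := by
  simp [sval]

theorem sval_le_l2_opNorm_sub (A : Matrix m n ℝ) {j : ℕ} {B : Matrix m n ℝ} (hB : B.rank < j) :
    sval A j ≤ ‖A - B‖ :=
  csInf_le ⟨0, by rintro c ⟨B, -, rfl⟩; exact norm_nonneg _⟩ ⟨B, hB, rfl⟩

theorem le_sval_sq {A : Matrix m n ℝ} {j : ℕ} (hj : 0 < j) {t : ℝ}
    (h : ∀ B : Matrix m n ℝ, B.rank < j → t ≤ ‖A - B‖ ^ 2) : t ≤ sval A j ^ 2 := by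
  rw [← Real.sqrt_le_left (sval_nonneg A j)]
  refine le_csInf ⟨‖A - 0‖, 0, by rwa [rank_zero], rfl⟩ ?_
  rintro _ ⟨B, hB, rfl⟩
  exact (Real.sqrt_le_left (norm_nonneg _)).2 (h B hB)

theorem sval_transpose [DecidableEq m] (A : Matrix m n ℝ) (j : ℕ) : sval Aᵀ j = sval A j := by
  unfold sval
  congr 1
  ext c
  constructor
  · rintro ⟨B, hB, rfl⟩
    refine ⟨Bᵀ, by rwa [rank_transpose], ?_⟩
    change ‖A - Bᵀ‖ = ‖Aᵀ - B‖
    rw [← l2_opNorm_transpose, transpose_sub, transpose_transpose]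
  · rintro ⟨B, hB, rfl⟩
    refine ⟨Bᵀ, by rwa [rank_transpose], ?_⟩
    change ‖Aᵀ - Bᵀ‖ = ‖A - B‖
    rw [← transpose_sub, l2_opNorm_transpose]

theorem sval_sq_le_sval_mul_sq_add [DecidableEq m] {P : Matrix m m ℝ} (hP : IsStarProjection P)
    (A : Matrix m n ℝ) (j : ℕ) :
    sval A j ^ 2 ≤ sval (P * A) j ^ 2 + ‖(1 - P) * A‖ ^ 2 := by
  rcases Nat.eq_zero_or_pos j with rfl | hj
  · rw [sval_zero, sval_zero]
    exact le_add_of_le_of_nonneg le_rfl (sq_nonneg _)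
  rw [← sub_le_iff_le_add]
  refine le_sval_sq hj fun B hB => sub_le_iff_le_add.2 ?_
  have hsplit : A - P * B = P * (P * A - B) + (1 - P) * A := by
    rw [Matrix.mul_sub, ← Matrix.mul_assoc, hP.isIdempotentElem.eq, Matrix.sub_mul,
      Matrix.one_mul]
    abel
  have horth : (P * (P * A - B))ᵀ * ((1 - P) * A) = 0 := by
    rw [transpose_mul, hP.transpose_eq, Matrix.mul_assoc, ← Matrix.mul_assoc P,
      hP.mul_one_sub_self, Matrix.zero_mul, Matrix.mul_zero]
  calc sval A j ^ 2 ≤ ‖A - P * B‖ ^ 2 := by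
        gcongr
        · exact sval_nonneg A j
        · exact sval_le_l2_opNorm_sub A ((rank_mul_le_right P B).trans_lt hB)
    _ ≤ ‖P * (P * A - B)‖ ^ 2 + ‖(1 - P) * A‖ ^ 2 := hsplit ▸ l2_opNorm_add_sq_le horth
    _ ≤ ‖P * A - B‖ ^ 2 + ‖(1 - P) * A‖ ^ 2 := by gcongr; exact hP.l2_opNorm_mul_le _

theorem sval_sq_le_sval_mul_sq_add' [DecidableEq m] {P : Matrix n n ℝ} (hP : IsStarProjection P)
    (A : Matrix m n ℝ) (j : ℕ) :
    sval A j ^ 2 ≤ sval (A * P) j ^ 2 + ‖A * (1 - P)‖ ^ 2 := by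
  have := sval_sq_le_sval_mul_sq_add hP Aᵀ j
  have hcompl : (1 - Pᵀ) * Aᵀ = (A * (1 - P))ᵀ := by
    rw [transpose_mul, transpose_sub, transpose_one]
  rwa [sval_transpose, ← hP.transpose_eq, ← transpose_mul, sval_transpose, hcompl,
    l2_opNorm_transpose] at this

end SingularValues

theorem cur_singular_value_lower_bound_general {m n k m' n' : ℕ}
    (A C : Matrix (Fin m) (Fin n) ℝ)
    (Q1L : Matrix (Fin m) (Fin k) ℝ) (Q2L : Matrix (Fin m) (Fin m') ℝ)
    (Q1U : Matrix (Fin n) (Fin k) ℝ) (Q2U : Matrix (Fin n) (Fin n') ℝ)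
    (hL1 : fromCols Q1L Q2L * (fromCols Q1L Q2L)ᵀ = 1)
    (hL2 : (fromCols Q1L Q2L)ᵀ * fromCols Q1L Q2L = 1)
    (hU1 : fromCols Q1U Q2U * (fromCols Q1U Q2U)ᵀ = 1)
    (hU2 : (fromCols Q1U Q2U)ᵀ * fromCols Q1U Q2U = 1)
    (h2L : Q2Lᵀ * A = Q2Lᵀ * C)
    (h2U : A * Q2U = C * Q2U)
    (j : ℕ) :
    Real.sqrt (sval A j ^ 2 - 2 * specNorm C ^ 2) ≤
      sval (Q1L * Q1Lᵀ * A * Q1U * Q1Uᵀ) j := by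
  set P := Q1L * Q1Lᵀ
  set R := Q1U * Q1Uᵀ
  have hP : IsStarProjection P :=
    isStarProjection_mul_transpose (transpose_mul_self_eq_one_of_fromCols hL2)
  have hR : IsStarProjection R :=
    isStarProjection_mul_transpose (transpose_mul_self_eq_one_of_fromCols hU2)
  have hPA : (1 - P) * A = (1 - P) * C := by
    rw [one_sub_mul_transpose_eq_of_fromCols hL1, Matrix.mul_assoc, h2L, Matrix.mul_assoc]
  have hAR : A * (1 - R) = C * (1 - R) := by
    rw [one_sub_mul_transpose_eq_of_fromCols hU1, ← Matrix.mul_assoc, h2U, Matrix.mul_assoc]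
  have hnormP : ‖(1 - P) * A‖ ^ 2 ≤ ‖C‖ ^ 2 := by
    gcongr
    exact hPA ▸ hP.one_sub.l2_opNorm_mul_le C
  have hnormR : ‖P * A * (1 - R)‖ ^ 2 ≤ ‖C‖ ^ 2 := by
    gcongr
    rw [Matrix.mul_assoc, hAR]
    exact (hP.l2_opNorm_mul_le _).trans (hR.one_sub.l2_opNorm_mul_le' C)
  have hsvalP := sval_sq_le_sval_mul_sq_add hP A j
  have hsvalR := sval_sq_le_sval_mul_sq_add' hR (P * A) j
  rw [Matrix.mul_assoc _ Q1U, Real.sqrt_le_left (sval_nonneg _ j)]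
  change _ - 2 * ‖C‖ ^ 2 ≤ _
  linarith

/-- CUR spectral lower bound: if σⱼ(A)² > 2‖C‖₂² then
σⱼ(Q₁ᴸ(Q₁ᴸ)ᵀAQ₁ᵁ(Q₁ᵁ)ᵀ) ≥ √(σⱼ(A)² − 2‖C‖₂²). -/
theorem cur_singular_value_lower_bound {m n k m' n' : ℕ}
    (A B C : Matrix (Fin m) (Fin n) ℝ) (hABC : A = B + C)
    (Q1L : Matrix (Fin m) (Fin k) ℝ) (Q2L : Matrix (Fin m) (Fin m') ℝ)
    (Q1U : Matrix (Fin n) (Fin k) ℝ) (Q2U : Matrix (Fin n) (Fin n') ℝ)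
    (hL1 : fromCols Q1L Q2L * (fromCols Q1L Q2L)ᵀ = 1)
    (hL2 : (fromCols Q1L Q2L)ᵀ * fromCols Q1L Q2L = 1)
    (hU1 : fromCols Q1U Q2U * (fromCols Q1U Q2U)ᵀ = 1)
    (hU2 : (fromCols Q1U Q2U)ᵀ * fromCols Q1U Q2U = 1)
    (h2L : Q2Lᵀ * A = Q2Lᵀ * C)
    (h2U : A * Q2U = C * Q2U)
    (j : ℕ) (hj1 : 1 ≤ j)
    (hgap : 2 * specNorm C ^ 2 < sval A j ^ 2) :
    Real.sqrt (sval A j ^ 2 - 2 * specNorm C ^ 2) ≤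
      sval (Q1L * Q1Lᵀ * A * Q1U * Q1Uᵀ) j :=
  cur_singular_value_lower_bound_general A C Q1L Q2L Q1U Q2U hL1 hL2 hU1 hU2 h2L h2U j
end

section
/- Under the spectrum-revealing pivoting condition (so that ‖S‖₂ ≤ γ·σ_{k+1}(A) with γ = √(mn)f(k+1)), the rank-j truncated SVD of the SRLU approximation satisfies, for j ≤ k: ‖Π₁AΠ₂ᵀ − (L̂Û)ⱼ‖₂ ≤ σ_{j+1}(A) + 2γ·σ_{k+1}(A) = σ_{j+1}(A)(1 + 2γ·σ_{k+1}(A)/σ_{j+1}(A)). -/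
open Matrix
lemma specNorm_nonneg {m n : Type*} [Fintype m] [Fintype n] [DecidableEq n]
    (A : Matrix m n ℝ) : 0 ≤ specNorm A := norm_nonneg _

lemma specNorm_add_le {m n : Type*} [Fintype m] [Fintype n] [DecidableEq n]
    (A B : Matrix m n ℝ) : specNorm (A + B) ≤ specNorm A + specNorm B := by
  unfold specNorm
  rw [map_add, map_add]
  exact norm_add_le _ _

lemma specNorm_neg {m n : Type*} [Fintype m] [Fintype n] [DecidableEq n]
    (A : Matrix m n ℝ) : specNorm (-A) = specNorm A := by
  unfold specNorm
  rw [map_neg, map_neg, norm_neg]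

lemma sval_le {m n : Type*} [Fintype m] [Fintype n] [DecidableEq n]
    (A B : Matrix m n ℝ) (j : ℕ) (h : B.rank < j) :
    sval A j ≤ specNorm (A - B) := by
  apply csInf_le
  · exact ⟨0, fun c ⟨B, _, hB⟩ => hB ▸ specNorm_nonneg _⟩
  · exact ⟨B, h, rfl⟩

lemma sval_add_le {m n : Type*} [Fintype m] [Fintype n] [DecidableEq n]
    (A E : Matrix m n ℝ) (j : ℕ) (hj : 0 < j) :
    sval (A + E) j ≤ sval A j + specNorm E := by
  have key : sval (A + E) j - specNorm E ≤ sval A j := by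
    apply le_csInf
    · exact ⟨specNorm (A - 0), ⟨0, by simpa [Matrix.rank_zero] using hj, rfl⟩⟩
    · rintro c ⟨B, hB, rfl⟩
      have h1 : sval (A + E) j ≤ specNorm (A + E - B) := sval_le _ B j hB
      have h2 : specNorm (A + E - B) ≤ specNorm (A - B) + specNorm E := by
        calc specNorm (A + E - B) = specNorm ((A - B) + E) := by congr 1; abel
          _ ≤ specNorm (A - B) + specNorm E := specNorm_add_le _ _
      linarith
  linarith

/-- if ‖S‖₂ ≤ γ·σ_{k+1}(A) with γ = √(mn)f(k+1), then for j ≤ k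
the best rank-j approximation (L̂Û)ⱼ of the SRLU approximation satisfies
‖Π₁AΠ₂ᵀ − (L̂Û)ⱼ‖₂ ≤ σ_{j+1}(A) + 2γ·σ_{k+1}(A). -/
theorem srlu_truncated_svd_error_bound {k m' n' : ℕ}
    (PA : Matrix (Fin k ⊕ Fin m') (Fin k ⊕ Fin n') ℝ)
    (Lhat : Matrix (Fin k ⊕ Fin m') (Fin k) ℝ)
    (Uhat : Matrix (Fin k) (Fin k ⊕ Fin n') ℝ)
    (S : Matrix (Fin m') (Fin n') ℝ)
    (hPA : PA = Lhat * Uhat + fromBlocks 0 0 0 S)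
    (f γ : ℝ) (hf : 1 < f)
    (hγ : γ = Real.sqrt (((k + m') * (k + n') : ℕ)) * f * (k + 1))
    (hS : specNorm (fromBlocks (0 : Matrix (Fin k) (Fin k) ℝ) 0 0 S) ≤
      γ * sval PA (k + 1))
    (j : ℕ) (hjk : j ≤ k)
    (LUj : Matrix (Fin k ⊕ Fin m') (Fin k ⊕ Fin n') ℝ)
    (hrank : LUj.rank ≤ j)
    (hbest : specNorm (Lhat * Uhat - LUj) = sval (Lhat * Uhat) (j + 1)) :
    specNorm (PA - LUj) ≤ sval PA (j + 1) + 2 * γ * sval PA (k + 1) := by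
  set F : Matrix (Fin k ⊕ Fin m') (Fin k ⊕ Fin n') ℝ := fromBlocks 0 0 0 S with hF
  have hLU : Lhat * Uhat = PA + (-F) := by rw [hPA]; abel
  have h1 : specNorm (PA - LUj) ≤ specNorm (Lhat * Uhat - LUj) + specNorm F := by
    calc specNorm (PA - LUj) = specNorm ((Lhat * Uhat - LUj) + F) := by
          rw [hPA]; congr 1; abel
      _ ≤ specNorm (Lhat * Uhat - LUj) + specNorm F := specNorm_add_le _ _
  have h2 : sval (Lhat * Uhat) (j + 1) ≤ sval PA (j + 1) + specNorm F := by
    rw [hLU]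
    have := sval_add_le PA (-F) (j + 1) (Nat.succ_pos j)
    rwa [specNorm_neg] at this
  linarith [hbest ▸ h1, h2, hS]
end
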